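/- arXiv:1611.05937 — 5 statements merged into one kernel-verified Lean document; each statement's English description precedes it below -/
import Mathlib

section
/- For every q ≥ 1 and every r with 1 ≤ r ≤ q, the (r+1)-st term of the lower central series of the generalized quaternion group Q_{2^{q+1}} ⊆ SU(2) satisfies Γ^{r+1}(Q_{2^{q+1}}) = μ_{2^{q−r}} (where μ_1 is the trivial subgroup). In particular, Q_{2^{q+1}} has nilpotency class exactly q. -/
open Matrix Complex

noncomputable section

abbrev SU2 := Matrix.specialUnitaryGroup (Fin 2) ℂ

instance SU2.instGroup : Group SU2 :=
  { (inferInstance : Monoid SU2) with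
    inv := fun A => ⟨star A.1, by
      rcases A.2 with ⟨hu, hd⟩
      refine ⟨⟨?_, ?_⟩, ?_⟩
      · simpa using hu.2
      · simpa using hu.1
      · show (star A.1).det = 1
        rw [Matrix.star_eq_conjTranspose, Matrix.det_conjTranspose]
        simp [show A.1.det = 1 from hd]⟩
    inv_mul_cancel := fun A => Subtype.ext A.2.1.1 }

lemma w_mem : !![(0:ℂ), -1; 1, 0] ∈ Matrix.specialUnitaryGroup (Fin 2) ℂ := by
  rw [Matrix.mem_specialUnitaryGroup_iff, Matrix.mem_unitaryGroup_iff]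
  constructor
  · ext i j
    fin_cases i <;> fin_cases j <;>
      simp [Matrix.mul_apply, Fin.sum_univ_two, Matrix.star_apply, Complex.star_def]
  · simp [Matrix.det_fin_two]

def w : SU2 := ⟨!![(0:ℂ), -1; 1, 0], w_mem⟩

lemma xi_conj (m : ℕ) : (starRingEnd ℂ) (2 * Real.pi * Complex.I / m) =
    -(2 * Real.pi * Complex.I / m) := by
  simp [map_div₀, Complex.conj_I, Complex.conj_ofReal, map_ofNat]
  ring

lemma xi_conj_exp (m : ℕ) : (starRingEnd ℂ) (Complex.exp (2 * Real.pi * Complex.I / m)) =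
    Complex.exp (-(2 * Real.pi * Complex.I / m)) := by
  rw [← Complex.exp_conj, xi_conj]

lemma xi_conj_exp' (m : ℕ) : (starRingEnd ℂ) (Complex.exp (-(2 * Real.pi * Complex.I / m))) =
    Complex.exp (2 * Real.pi * Complex.I / m) := by
  rw [← Complex.exp_conj, map_neg, xi_conj, neg_neg]

lemma xi_mem (m : ℕ) :
    !![Complex.exp (2 * Real.pi * Complex.I / m), 0; 0,
       Complex.exp (-(2 * Real.pi * Complex.I / m))]
      ∈ Matrix.specialUnitaryGroup (Fin 2) ℂ := by
  rw [Matrix.mem_specialUnitaryGroup_iff, Matrix.mem_unitaryGroup_iff]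
  have hstar : star (!![Complex.exp (2 * Real.pi * Complex.I / m), 0; 0,
       Complex.exp (-(2 * Real.pi * Complex.I / m))]) =
      !![Complex.exp (-(2 * Real.pi * Complex.I / m)), 0; 0,
       Complex.exp (2 * Real.pi * Complex.I / m)] := by
    ext i j
    fin_cases i <;> fin_cases j <;>
      simp [Matrix.star_apply, Complex.star_def, xi_conj_exp m, xi_conj_exp' m]
  constructor
  · rw [hstar]
    ext i j
    fin_cases i <;> fin_cases j <;>
      simp [Matrix.mul_apply, Fin.sum_univ_two, ← Complex.exp_add]
  · simp [Matrix.det_fin_two, ← Complex.exp_add]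

def ξ (m : ℕ) : SU2 :=
  ⟨!![Complex.exp (2 * Real.pi * Complex.I / m), 0; 0,
      Complex.exp (-(2 * Real.pi * Complex.I / m))], xi_mem m⟩

/-- `μ m` : the cyclic subgroup of `SU2` generated by `ξ m`. -/
def μ (m : ℕ) : Subgroup SU2 := Subgroup.zpowers (ξ m)

/-- `genQ q` is the generalized quaternion group `Q_{2^{q+1}} ⊆ SU2`,
generated by `ξ_{2^q}` and `w`. -/
def genQ (q : ℕ) : Subgroup SU2 := Subgroup.closure {ξ (2 ^ q), w}

/-- Lower central series of a subgroup, as subgroups of the ambient group: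
`lcs H k = Γ^{k+1}(H)`, so `lcs H 0 = Γ¹(H) = H` and `lcs H (k+1) = ⁅lcs H k, H⁆`. -/
def lcs {G : Type*} [Group G] (H : Subgroup G) : ℕ → Subgroup G
  | 0 => H
  | (k + 1) => ⁅lcs H k, H⁆

/-- The set of diagonal matrices in `SU2`: the maximal torus `T`. -/
def Tset : Set SU2 :=
  {x | (x : Matrix (Fin 2) (Fin 2) ℂ) 0 1 = 0 ∧ (x : Matrix (Fin 2) (Fin 2) ℂ) 1 0 = 0}

/-- The set of anti-diagonal matrices in `SU2`: the coset `wT`. -/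
def wTset : Set SU2 :=
  {x | (x : Matrix (Fin 2) (Fin 2) ℂ) 0 0 = 0 ∧ (x : Matrix (Fin 2) (Fin 2) ℂ) 1 1 = 0}

/-- `PU(2)`, the quotient of `SU(2)` by its center `{±I}`. -/
abbrev PU2 := SU2 ⧸ Subgroup.center SU2

/-! The group `Q = Q_{2^{q+1}}` is generated by `a = ξ_{2^q}` and `w`, where `w` inverts `a`
by conjugation and `w² = -1` is a power of `a`. Hence every element is `aⁿ` or `w aⁿ`, and the
only nontrivial commutators are `⁅aⁿ, w aᵐ⁆ = a²ⁿ` and `⁅w aⁿ, w aᵐ⁆ = a^{2(m-n)}`. So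
`⁅⟨aᵏ⟩, Q⁆ = ⟨a²ᵏ⟩` and `⁅Q, Q⁆ = ⟨a²⟩`, whence `Γ^{r+1}(Q) = ⟨a^{2^r}⟩ = μ_{2^{q-r}}`. -/

open Subgroup
open scoped commutatorElement

section DihedralRelation

variable {G : Type*} [Group G] {a b : G}

theorem zpow_mul_eq_mul_zpow_neg (hab : a * b = b * a⁻¹) (n : ℤ) :
    a ^ n * b = b * a ^ (-n) := by
  have h : SemiconjBy b a⁻¹ a := hab.symm
  rw [← _root_.inv_zpow']
  exact (h.zpow_right n).eq.symm

theorem mul_zpow_mul_inv_eq_zpow_neg (hab : a * b = b * a⁻¹) (n : ℤ) :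
    b * a ^ n * b⁻¹ = a ^ (-n) := by
  have h := zpow_mul_eq_mul_zpow_neg hab (-n)
  rw [neg_neg] at h
  rw [← h, mul_inv_cancel_right]

theorem commutatorElement_zpow_mul_zpow (hab : a * b = b * a⁻¹) (n m : ℤ) :
    ⁅a ^ n, b * a ^ m⁆ = a ^ (2 * n) := by
  calc ⁅a ^ n, b * a ^ m⁆ = a ^ n * (b * a ^ (-n) * b⁻¹) := by group
    _ = a ^ (2 * n) := by rw [mul_zpow_mul_inv_eq_zpow_neg hab]; group

theorem commutatorElement_mul_zpow_mul_zpow (hab : a * b = b * a⁻¹) (n m : ℤ) :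
    ⁅b * a ^ n, b * a ^ m⁆ = a ^ (2 * (m - n)) := by
  calc ⁅b * a ^ n, b * a ^ m⁆
      = b * a ^ n * b⁻¹ * (b * (b * a ^ (m - n) * b⁻¹) * b⁻¹) * (b * a ^ (-m) * b⁻¹) := by
        group
    _ = a ^ (2 * (m - n)) := by simp only [mul_zpow_mul_inv_eq_zpow_neg hab, neg_neg]; group

theorem exists_zpow_or_mul_zpow_of_mem_closure_pair (hab : a * b = b * a⁻¹)
    (hb : b * b ∈ zpowers a) {x : G} (hx : x ∈ closure {a, b}) :
    (∃ n : ℤ, x = a ^ n) ∨ ∃ n : ℤ, x = b * a ^ n := by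
  obtain ⟨k, hk⟩ := mem_zpowers_iff.mp hb
  have hba := zpow_mul_eq_mul_zpow_neg hab
  induction hx using closure_induction with
  | mem x hx =>
    rcases hx with rfl | rfl
    · exact .inl ⟨1, (zpow_one x).symm⟩
    · exact .inr ⟨0, by group⟩
  | one => exact .inl ⟨0, (zpow_zero a).symm⟩
  | mul x y _ _ ihx ihy =>
    rcases ihx with ⟨n, rfl⟩ | ⟨n, rfl⟩ <;> rcases ihy with ⟨m, rfl⟩ | ⟨m, rfl⟩
    · exact .inl ⟨n + m, by group⟩
    · exact .inr ⟨-n + m, by rw [← mul_assoc, hba]; group⟩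
    · exact .inr ⟨n + m, by group⟩
    · refine .inl ⟨k - n + m, ?_⟩
      rw [← mul_assoc, mul_assoc b, hba, ← mul_assoc, ← hk]
      group
  | inv x _ ihx =>
    rcases ihx with ⟨n, rfl⟩ | ⟨n, rfl⟩
    · exact .inl ⟨-n, by group⟩
    · refine .inr ⟨n + k, ?_⟩
      calc (b * a ^ n)⁻¹ = a ^ (-n - k) * b := by rw [_root_.zpow_sub, hk]; group
        _ = b * a ^ (n + k) := by rw [hba]; ring_nf

theorem zpow_natCast_mul_mem_zpowers (a : G) (k : ℕ) (n : ℤ) :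
    a ^ ((k : ℤ) * n) ∈ zpowers (a ^ k) := by
  rw [_root_.zpow_mul, zpow_natCast]
  exact zpow_mem_zpowers _ _

theorem commutator_zpowers_closure_pair (hab : a * b = b * a⁻¹) (hb : b * b ∈ zpowers a)
    (k : ℕ) : ⁅zpowers (a ^ k), closure {a, b}⁆ = zpowers (a ^ (2 * k)) := by
  apply le_antisymm
  · rw [commutator_le]
    intro x hx y hy
    obtain ⟨j, rfl⟩ := mem_zpowers_iff.mp hx
    rw [← zpow_natCast a k, ← _root_.zpow_mul]
    rcases exists_zpow_or_mul_zpow_of_mem_closure_pair hab hb hy with ⟨m, rfl⟩ | ⟨m, rfl⟩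
    · rw [commutatorElement_eq_one_iff_commute.mpr ((Commute.refl a).zpow_zpow _ _)]
      exact one_mem _
    · rw [commutatorElement_zpow_mul_zpow hab]
      simpa [mul_assoc] using zpow_natCast_mul_mem_zpowers a (2 * k) j
  · rw [zpowers_le]
    have h := commutatorElement_zpow_mul_zpow hab k 0
    rw [zpow_zero, mul_one, zpow_natCast] at h
    rw [← zpow_natCast a (2 * k), Nat.cast_mul, Nat.cast_ofNat, ← h]
    exact commutator_mem_commutator (mem_zpowers _) (Subgroup.subset_closure (by simp))

theorem commutator_closure_pair_self (hab : a * b = b * a⁻¹) (hb : b * b ∈ zpowers a) :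
    ⁅closure {a, b}, closure {a, b}⁆ = zpowers (a ^ 2) := by
  apply le_antisymm
  · rw [commutator_le]
    intro x hx y hy
    have hmem : ∀ n : ℤ, a ^ (2 * n) ∈ zpowers (a ^ 2) := zpow_natCast_mul_mem_zpowers a 2
    have hx := exists_zpow_or_mul_zpow_of_mem_closure_pair hab hb hx
    have hy := exists_zpow_or_mul_zpow_of_mem_closure_pair hab hb hy
    rcases hx with ⟨n, rfl⟩ | ⟨n, rfl⟩ <;> rcases hy with ⟨m, rfl⟩ | ⟨m, rfl⟩
    · rw [commutatorElement_eq_one_iff_commute.mpr ((Commute.refl a).zpow_zpow _ _)]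
      exact one_mem _
    · rw [commutatorElement_zpow_mul_zpow hab]
      exact hmem n
    · rw [← commutatorElement_inv, commutatorElement_zpow_mul_zpow hab]
      exact inv_mem (hmem m)
    · rw [commutatorElement_mul_zpow_mul_zpow hab]
      exact hmem (m - n)
  · calc zpowers (a ^ 2) = ⁅zpowers (a ^ 1), closure {a, b}⁆ :=
          (commutator_zpowers_closure_pair hab hb 1).symm
      _ ≤ _ := commutator_mono (by simpa using Subgroup.subset_closure (by simp)) le_rfl

theorem lcs_closure_pair (hab : a * b = b * a⁻¹) (hb : b * b ∈ zpowers a) :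
    ∀ r, 1 ≤ r → lcs (closure {a, b}) r = zpowers (a ^ 2 ^ r)
  | 0, h => absurd h (by norm_num)
  | 1, _ => commutator_closure_pair_self hab hb
  | r + 2, _ => by
    rw [lcs, lcs_closure_pair hab hb (r + 1) (by omega), commutator_zpowers_closure_pair hab hb,
      ← pow_succ']

end DihedralRelation

open Real

theorem coe_ξ_pow (m k : ℕ) : ((ξ m ^ k : SU2) : Matrix (Fin 2) (Fin 2) ℂ) =
    !![exp (k * (2 * π * I / m)), 0; 0, exp (-(k * (2 * π * I / m)))] := by
  induction k with
  | zero => ext i j; fin_cases i <;> fin_cases j <;> simp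
  | succ k ih =>
    rw [pow_succ, Submonoid.coe_mul, ih]
    ext i j
    fin_cases i <;> fin_cases j <;> simp [ξ, Matrix.mul_apply, ← Complex.exp_add] <;> ring_nf

theorem ξ_mul_pow (m : ℕ) {k : ℕ} (hk : k ≠ 0) : ξ (m * k) ^ k = ξ m := by
  have h : (k : ℂ) * (2 * π * I / ↑(m * k)) = 2 * π * I / m := by
    rw [Nat.cast_mul, mul_div_assoc', mul_comm (m : ℂ),
      mul_div_mul_left _ _ (Nat.cast_ne_zero.mpr hk)]
  exact Subtype.ext (by rw [coe_ξ_pow, h]; rfl)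

theorem ξ_one : ξ 1 = 1 := by
  ext i j
  fin_cases i <;> fin_cases j <;> simp [ξ, Complex.exp_neg]

theorem exp_two_pi_mul_I_div_two : exp (2 * π * I / 2) = -1 := by
  rw [mul_div_right_comm, mul_div_cancel_left₀ _ two_ne_zero, exp_pi_mul_I]

theorem w_mul_w : w * w = ξ 2 := by
  ext i j
  fin_cases i <;> fin_cases j <;> simp [w, ξ, Complex.exp_neg, exp_two_pi_mul_I_div_two]

theorem ξ_two_ne_one : ξ 2 ≠ 1 := by
  intro h
  have := congrArg (fun x : SU2 => (x : Matrix (Fin 2) (Fin 2) ℂ) 0 0) h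
  norm_num [ξ, exp_two_pi_mul_I_div_two] at this

theorem ξ_mul_w (m : ℕ) : ξ m * w = w * (ξ m)⁻¹ := by
  ext i j
  change ((ξ m).1 * w.1) i j = (w.1 * star (ξ m).1) i j
  fin_cases i <;> fin_cases j <;>
    simp [w, ξ, Matrix.mul_apply, Matrix.star_apply, xi_conj_exp m, xi_conj_exp' m]

theorem ξ_two_pow_pow {q r : ℕ} (h : r ≤ q) : ξ (2 ^ q) ^ 2 ^ r = ξ (2 ^ (q - r)) := by
  rw [← ξ_mul_pow (2 ^ (q - r)) (pow_ne_zero r two_ne_zero), ← pow_add, Nat.sub_add_cancel h]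

theorem lcs_genQ {q r : ℕ} (hr : 1 ≤ r) (hrq : r ≤ q) : lcs (genQ q) r = μ (2 ^ (q - r)) := by
  have hw : w * w ∈ zpowers (ξ (2 ^ q)) := by
    have h := ξ_two_pow_pow (Nat.sub_le q 1)
    rw [Nat.sub_sub_self (hr.trans hrq), pow_one] at h
    rw [w_mul_w, ← h]
    exact npow_mem_zpowers _ _
  rw [genQ, lcs_closure_pair (ξ_mul_w _) hw r hr, ξ_two_pow_pow hrq, μ]

/-- For `q ≥ 1` and `1 ≤ r ≤ q`, one has `Γ^{r+1}(Q_{2^{q+1}}) = μ_{2^{q-r}}`; in particular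
`Q_{2^{q+1}}` has nilpotency class exactly `q`
(i.e. `Γ^{q+1}` is trivial but `Γ^q` is not). -/
theorem stmt3 (q : ℕ) (hq : 1 ≤ q) :
    (∀ r : ℕ, 1 ≤ r → r ≤ q → lcs (genQ q) r = μ (2 ^ (q - r))) ∧
      (lcs (genQ q) q = ⊥ ∧ lcs (genQ q) (q - 1) ≠ ⊥) := by
  refine ⟨fun r hr hrq => lcs_genQ hr hrq, ?_, ?_⟩
  · rw [lcs_genQ hq le_rfl, Nat.sub_self, pow_zero, μ, ξ_one, zpowers_one_eq_bot]
  · have h : ξ 2 ∈ lcs (genQ q) (q - 1) := by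
      rcases Nat.lt_or_ge 1 q with hq' | hq'
      · rw [lcs_genQ (by omega) (by omega), Nat.sub_sub_self hq, pow_one]
        exact mem_zpowers _
      · obtain rfl : q = 1 := by omega
        exact Subgroup.subset_closure (by simp)
    exact fun hbot => ξ_two_ne_one (by simpa [hbot] using h)

end
end

section
/- Let H be a subgroup of SU(2) with H ⊆ T ∪ wT, let r > 2, and suppose the r-th term of the lower central series satisfies Γ^r(H) = μ_{2^n} for some n ≥ 1. Then Γ^{r−1}(H) = μ_{2^{n+1}}. -/
open Matrix Complex

noncomputable section

/-!
`K = Γ^{r-1}(H)` lies in `T`, because every commutator of elements of `T ∪ wT` is diagonal.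
On `K` the commutators with `H` are `⁅t, s⁆ = 1` for `s ∈ T` and `⁅t, x⁆ = t²` for `x ∈ wT`; as
`K` is abelian, `⁅K, H⁆` consists of squares of elements of `K`, and `H` must meet `wT` since
`⁅K, H⁆ ≠ 1`. So every `k ∈ K` satisfies `k² ∈ μ_{2^n}`, i.e. `k ∈ μ_{2^{n+1}}` (torsion of
`T ≅ S¹`), and some `k₀ ∈ K` is a square root of `ξ_{2^n}`; it has order `2^{n+1}` and therefore
generates `μ_{2^{n+1}}`.
-/

open scoped commutatorElement

section GroupTheory

variable {G : Type*} [Group G]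

lemma lcs_le_self (H : Subgroup G) : ∀ k, lcs H k ≤ H
  | 0 => le_rfl
  | k + 1 => (Subgroup.commutator_mono (lcs_le_self H k) le_rfl).trans H.commutator_le_self

lemma lcs_succ_le_commutator (H : Subgroup G) (k : ℕ) : lcs H (k + 1) ≤ ⁅H, H⁆ :=
  Subgroup.commutator_mono (lcs_le_self H k) le_rfl

lemma exists_sq_eq_of_mem_commutator {K H : Subgroup G}
    (hK : ∀ a ∈ K, ∀ b ∈ K, Commute a b) (hKH : ∀ k ∈ K, ∀ h ∈ H, ⁅k, h⁆ = 1 ∨ ⁅k, h⁆ = k ^ 2)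
    {g : G} (hg : g ∈ ⁅K, H⁆) : ∃ k ∈ K, k ^ 2 = g := by
  rw [Subgroup.commutator_def] at hg
  induction hg using Subgroup.closure_induction with
  | mem _ hx =>
    obtain ⟨k, hk, h, hh, rfl⟩ := hx
    rcases hKH k hk h hh with e | e
    exacts [⟨1, one_mem K, by rw [e, one_pow]⟩, ⟨k, hk, e.symm⟩]
  | one => exact ⟨1, one_mem K, one_pow 2⟩
  | mul _ _ _ _ hx hy =>
    obtain ⟨a, ha, rfl⟩ := hx
    obtain ⟨b, hb, rfl⟩ := hy
    exact ⟨a * b, mul_mem ha hb, (hK a ha b hb).mul_pow 2⟩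
  | inv _ _ hx =>
    obtain ⟨a, ha, rfl⟩ := hx
    exact ⟨a⁻¹, inv_mem ha, inv_pow a 2⟩

lemma orderOf_eq_prime_pow_succ_of_pow_prime_eq {p n : ℕ} [Fact p.Prime] {g x : G} (hn : n ≠ 0)
    (hx : orderOf x = p ^ n) (hg : g ^ p = x) : orderOf g = p ^ (n + 1) := by
  have hp := (Fact.out : p.Prime).one_lt
  apply orderOf_eq_prime_pow
  · obtain ⟨m, rfl⟩ := Nat.exists_eq_succ_of_ne_zero hn
    rw [pow_succ', pow_mul, hg]
    exact pow_ne_one_of_lt_orderOf (by positivity) (hx ▸ Nat.pow_lt_pow_succ hp)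
  · rw [pow_succ', pow_mul, hg, ← hx, pow_orderOf_eq_one]

end GroupTheory

namespace SU2

lemma mul_apply (x y : SU2) (i j : Fin 2) :
    (x * y).1 i j = x.1 i 0 * y.1 0 j + x.1 i 1 * y.1 1 j := by
  simp [Matrix.mul_apply, Fin.sum_univ_two]

lemma inv_apply (x : SU2) (i j : Fin 2) : (x⁻¹).1 i j = starRingEnd ℂ (x.1 j i) := rfl

lemma det_eq_one (x : SU2) : x.1 0 0 * x.1 1 1 - x.1 0 1 * x.1 1 0 = 1 := by
  simpa [Matrix.det_fin_two] using (Matrix.mem_specialUnitaryGroup_iff.mp x.2).2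

lemma ext_of_apply {x y : SU2} (h : ∀ i j, x.1 i j = y.1 i j) : x = y :=
  Subtype.ext (Matrix.ext h)

def torus : Subgroup SU2 where
  carrier := Tset
  one_mem' := by constructor <;> rfl
  mul_mem' {t s} ht hs := by constructor <;> simp [mul_apply, ht.1, ht.2, hs.1, hs.2]
  inv_mem' {t} ht := by constructor <;> simp [inv_apply, ht.1, ht.2]

lemma mul_mem_torus_of_mem_wTset {x y : SU2} (hx : x ∈ wTset) (hy : y ∈ wTset) :
    x * y ∈ torus := by
  constructor <;> simp [mul_apply, hx.1, hx.2, hy.1, hy.2]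

lemma inv_mem_wTset {x : SU2} (hx : x ∈ wTset) : x⁻¹ ∈ wTset := by
  constructor <;> simp [inv_apply, hx.1, hx.2]

/-- `diag(λ, λ⁻¹) ↦ λ`, identifying `T` with the unit circle. -/
def torusCoord : torus →* ℂ where
  toFun t := t.1.1 0 0
  map_one' := rfl
  map_mul' t s := by simp [mul_apply, t.2.1]

lemma torusCoord_apply (t : torus) : torusCoord t = t.1.1 0 0 := rfl

lemma torusCoord_mul_apply_one_one (t : torus) : torusCoord t * t.1.1 1 1 = 1 := by
  simpa [torusCoord_apply, t.2.1, t.2.2] using det_eq_one t.1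

lemma torusCoord_injective : Function.Injective torusCoord := by
  intro t s hts
  have h11 : t.1.1 1 1 = s.1.1 1 1 := by
    have ht := torusCoord_mul_apply_one_one t
    have hs := torusCoord_mul_apply_one_one s
    rw [hts] at ht
    exact mul_left_cancel₀ (left_ne_zero_of_mul_eq_one hs) (ht.trans hs.symm)
  refine Subtype.ext (ext_of_apply fun i j => ?_)
  fin_cases i <;> fin_cases j
  exacts [hts, t.2.1.trans s.2.1.symm, t.2.2.trans s.2.2.symm, h11]

lemma torus_commute {a b : SU2} (ha : a ∈ torus) (hb : b ∈ torus) : Commute a b := by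
  have := torusCoord_injective (a₁ := ⟨a, ha⟩ * ⟨b, hb⟩) (a₂ := ⟨b, hb⟩ * ⟨a, ha⟩)
    (by rw [map_mul, map_mul, mul_comm])
  exact congrArg Subtype.val this

lemma inv_apply_of_mem_torus {t : SU2} (ht : t ∈ torus) :
    (t⁻¹).1 0 0 = t.1 1 1 ∧ (t⁻¹).1 1 1 = t.1 0 0 := by
  have hdet := torusCoord_mul_apply_one_one ⟨t, ht⟩
  rw [torusCoord_apply] at hdet
  have hright := congrArg (fun y : SU2 => y.1 0 0) (mul_inv_cancel t)
  have hleft := congrArg (fun y : SU2 => y.1 1 1) (inv_mul_cancel t)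
  simp only [mul_apply, ht.1, zero_mul, add_zero, OneMemClass.coe_one, one_apply_eq] at hright
  simp only [mul_apply, (inv_mem ht).2, zero_mul, zero_add, OneMemClass.coe_one, one_apply_eq] at hleft
  constructor
  · linear_combination t.1 1 1 * hright - (t⁻¹).1 0 0 * hdet
  · linear_combination t.1 0 0 * hleft - (t⁻¹).1 1 1 * hdet

lemma mul_eq_inv_mul_of_mem_wTset {x t : SU2} (hx : x ∈ wTset) (ht : t ∈ torus) :
    x * t = t⁻¹ * x := by
  obtain ⟨h00, h11⟩ := inv_apply_of_mem_torus ht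
  have hinv : t⁻¹ ∈ torus := inv_mem ht
  refine ext_of_apply fun i j => ?_
  fin_cases i <;> fin_cases j <;>
    simp [mul_apply, hx.1, hx.2, ht.1, ht.2, hinv.1, hinv.2, h00, h11, mul_comm]

lemma commutatorElement_of_mem_wTset {t x : SU2} (ht : t ∈ torus) (hx : x ∈ wTset) :
    ⁅t, x⁆ = t ^ 2 := by
  rw [commutatorElement_def, mul_assoc t x, mul_eq_inv_mul_of_mem_wTset hx (inv_mem ht), inv_inv]
  simp [pow_two, mul_assoc]

lemma commutatorElement_eq_one_or_sq {t h : SU2} (ht : t ∈ torus) (hh : h ∈ Tset ∪ wTset) :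
    ⁅t, h⁆ = 1 ∨ ⁅t, h⁆ = t ^ 2 := by
  rcases hh with hh | hh
  · exact Or.inl (commutatorElement_eq_one_iff_commute.mpr (torus_commute ht hh))
  · exact Or.inr (commutatorElement_of_mem_wTset ht hh)

lemma commutatorElement_mem_torus {g h : SU2} (hg : g ∈ Tset ∪ wTset) (hh : h ∈ Tset ∪ wTset) :
    ⁅g, h⁆ ∈ torus := by
  rcases hg with hg | hg
  · rcases commutatorElement_eq_one_or_sq hg hh with e | e <;> rw [e]
    exacts [one_mem _, pow_mem hg 2]
  rcases hh with hh | hh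
  · rw [← commutatorElement_inv, commutatorElement_of_mem_wTset hh hg]
    exact inv_mem (pow_mem hh 2)
  · rw [commutatorElement_def, mul_assoc (g * h)]
    exact mul_mem (mul_mem_torus_of_mem_wTset hg hh)
      (mul_mem_torus_of_mem_wTset (inv_mem_wTset hg) (inv_mem_wTset hh))

lemma isPrimitiveRoot_torusCoord {t : SU2} (ht : t ∈ torus) :
    IsPrimitiveRoot (torusCoord ⟨t, ht⟩) (orderOf t) := by
  rw [← Subgroup.orderOf_mk t ht, ← orderOf_injective torusCoord torusCoord_injective]
  exact IsPrimitiveRoot.orderOf _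

/-- Inside `T ≅ S¹` the `m`-torsion is cyclic, generated by any element of order `m`. -/
lemma mem_zpowers_of_pow_orderOf_eq_one {g t : SU2} (hg : g ∈ torus) (ht : t ∈ torus)
    (hg0 : orderOf g ≠ 0) (h : t ^ orderOf g = 1) : t ∈ Subgroup.zpowers g := by
  have : NeZero (orderOf g) := ⟨hg0⟩
  have hpow : (⟨t, ht⟩ : torus) ^ orderOf g = 1 := Subtype.ext h
  obtain ⟨i, -, hi⟩ := (isPrimitiveRoot_torusCoord hg).eq_pow_of_pow_eq_one
    (ξ := torusCoord ⟨t, ht⟩) (by rw [← map_pow, hpow, map_one])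
  refine ⟨i, ?_⟩
  have : (⟨g, hg⟩ : torus) ^ i = ⟨t, ht⟩ := torusCoord_injective (by rw [map_pow, hi])
  simpa using congrArg Subtype.val this

lemma ξ_mem_torus (m : ℕ) : ξ m ∈ torus := by
  constructor <;> simp [ξ]

lemma orderOf_ξ {m : ℕ} (hm : m ≠ 0) : orderOf (ξ m) = m :=
  (isPrimitiveRoot_torusCoord (ξ_mem_torus m)).unique (by
    simpa [torusCoord_apply, ξ] using Complex.isPrimitiveRoot_exp m hm)

lemma pow_eq_one_of_mem_μ {m : ℕ} (hm : m ≠ 0) {g : SU2} (hg : g ∈ μ m) : g ^ m = 1 := by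
  rw [← orderOf_ξ hm]
  exact orderOf_dvd_iff_pow_eq_one.mp (orderOf_dvd_of_mem_zpowers hg)

lemma mem_μ_of_pow_eq_one {m : ℕ} (hm : m ≠ 0) {t : SU2} (ht : t ∈ torus) (h : t ^ m = 1) :
    t ∈ μ m :=
  mem_zpowers_of_pow_orderOf_eq_one (ξ_mem_torus m) ht (by rwa [orderOf_ξ hm])
    (by rwa [orderOf_ξ hm])

lemma μ_le_zpowers {m : ℕ} (hm : m ≠ 0) {t : SU2} (ht : t ∈ torus) (htm : orderOf t = m) :
    μ m ≤ Subgroup.zpowers t :=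
  Subgroup.zpowers_le.mpr <| mem_zpowers_of_pow_orderOf_eq_one ht (ξ_mem_torus m) (htm ▸ hm)
    (htm ▸ pow_eq_one_of_mem_μ hm (Subgroup.mem_zpowers _))

lemma commutator_le_torus {H : Subgroup SU2} (hsub : (H : Set SU2) ⊆ Tset ∪ wTset) :
    ⁅H, H⁆ ≤ torus :=
  Subgroup.commutator_le.mpr fun _ hg _ hh => commutatorElement_mem_torus (hsub hg) (hsub hh)

lemma μ_ne_bot {m : ℕ} (hm : 1 < m) : μ m ≠ ⊥ := by
  rw [μ, Ne, Subgroup.zpowers_eq_bot, ← orderOf_eq_one_iff, orderOf_ξ (by omega)]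
  omega

lemma exists_mem_wTset_of_commutator_ne_bot {K H : Subgroup SU2} (hK : K ≤ torus)
    (hsub : (H : Set SU2) ⊆ Tset ∪ wTset) (hne : ⁅K, H⁆ ≠ ⊥) : ∃ x ∈ H, x ∈ wTset := by
  by_contra! hno
  refine hne (eq_bot_iff.mpr <| Subgroup.commutator_le.mpr fun k hk g hg => ?_)
  rw [(torus_commute (hK hk) ((hsub hg).resolve_right (hno g hg))).commutator_eq]
  exact one_mem ⊥

end SU2

open SU2 in
/-- If `H ⊆ T ∪ wT` is a subgroup, `r > 2` and `Γ^r(H) = μ_{2^n}` (`n ≥ 1`), then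
`Γ^{r-1}(H) = μ_{2^{n+1}}`.  (Here `Γ^{k+1}(H) = lcs H k`.) -/
theorem stmt5 (H : Subgroup SU2) (hsub : (H : Set SU2) ⊆ Tset ∪ wTset) (r n : ℕ)
    (hr : 2 < r) (hn : 1 ≤ n) (h : lcs H (r - 1) = μ (2 ^ n)) :
    lcs H (r - 2) = μ (2 ^ (n + 1)) := by
  obtain ⟨j, rfl⟩ : ∃ j, r = j + 3 := ⟨r - 3, by omega⟩
  set K := lcs H (j + 1)
  replace h : ⁅K, H⁆ = μ (2 ^ n) := h
  show K = μ (2 ^ (n + 1))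
  have hKT : K ≤ torus := (lcs_succ_le_commutator H j).trans (commutator_le_torus hsub)
  have hξ : ξ (2 ^ n) ∈ ⁅K, H⁆ := h ▸ Subgroup.mem_zpowers _
  obtain ⟨x, hxH, hxw⟩ := exists_mem_wTset_of_commutator_ne_bot hKT hsub
    (h ▸ μ_ne_bot (Nat.one_lt_two_pow (by omega)))
  obtain ⟨k₀, hk₀K, hk₀⟩ := exists_sq_eq_of_mem_commutator
    (fun a ha b hb => torus_commute (hKT ha) (hKT hb))
    (fun k hk h hh => commutatorElement_eq_one_or_sq (hKT hk) (hsub hh)) hξ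
  have hk₀ord : orderOf k₀ = 2 ^ (n + 1) :=
    orderOf_eq_prime_pow_succ_of_pow_prime_eq (by omega) (orderOf_ξ (by positivity)) hk₀
  refine le_antisymm (fun k hk => mem_μ_of_pow_eq_one (by positivity) (hKT hk) ?_) ?_
  · have hk2 : k ^ 2 ∈ μ (2 ^ n) := h ▸ commutatorElement_of_mem_wTset (hKT hk) hxw ▸
      Subgroup.commutator_mem_commutator hk hxH
    rw [pow_succ', pow_mul]
    exact pow_eq_one_of_mem_μ (by positivity) hk2
  · exact (μ_le_zpowers (by positivity) (hKT hk₀K) hk₀ord).trans (Subgroup.zpowers_le.mpr hk₀K)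
end
end

section
/- Let X, Y ∈ SU(2) satisfy [X, Y] = X Y X⁻¹ Y⁻¹ = −I, and let g ∈ SU(2) be such that g X g⁻¹ is a diagonal matrix. Then g X g⁻¹ equals ξ_4 or −ξ_4, and g Y g⁻¹ lies in wT, i.e., g Y g⁻¹ is an anti-diagonal matrix (both its diagonal entries are zero). -/
open Matrix Complex

noncomputable section

/-- If `[X,Y] = -I` and `g` diagonalizes `X`, then `g X g⁻¹ = ±ξ₄` and `g Y g⁻¹`
is anti-diagonal. -/
theorem stmt7 (X Y g : SU2)
    (hXY : ((X * Y * X⁻¹ * Y⁻¹ : SU2) : Matrix (Fin 2) (Fin 2) ℂ) = -1)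
    (hd : g * X * g⁻¹ ∈ Tset) :
    (((g * X * g⁻¹ : SU2) : Matrix (Fin 2) (Fin 2) ℂ) = ((ξ 4 : SU2) : Matrix (Fin 2) (Fin 2) ℂ) ∨
      ((g * X * g⁻¹ : SU2) : Matrix (Fin 2) (Fin 2) ℂ) = -((ξ 4 : SU2) : Matrix (Fin 2) (Fin 2) ℂ)) ∧
      g * Y * g⁻¹ ∈ wTset := by
  set A := g * X * g⁻¹ with hA
  set B := g * Y * g⁻¹ with hB
  have hcomm : A * B = (g * (X * Y * X⁻¹ * Y⁻¹) * g⁻¹) * (B * A) := by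
    rw [hA, hB]; group
  have hgg : (g : Matrix (Fin 2) (Fin 2) ℂ) * ((g⁻¹ : SU2) : Matrix (Fin 2) (Fin 2) ℂ) = 1 := by
    have h := congrArg (Subtype.val) (mul_inv_cancel g)
    simp only [Submonoid.coe_mul, Submonoid.coe_one] at h
    exact h
  have hc : ((A : Matrix (Fin 2) (Fin 2) ℂ) * B) = -((B : Matrix (Fin 2) (Fin 2) ℂ) * A) := by
    have h := congrArg (Subtype.val) hcomm
    simp only [Submonoid.coe_mul] at h hXY
    rw [h, hXY]
    simp only [mul_neg_one, neg_mul, one_mul, hgg]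
  obtain ⟨ha01, ha10⟩ := hd
  set a := (A : Matrix (Fin 2) (Fin 2) ℂ) with ha_def
  set b := (B : Matrix (Fin 2) (Fin 2) ℂ) with hb_def
  have hdetA : a.det = 1 := A.2.2
  have hdetB : b.det = 1 := B.2.2
  rw [Matrix.det_fin_two, ha01] at hdetA
  simp at hdetA
  have ha00 : a 0 0 ≠ 0 := by
    intro h; rw [h, zero_mul] at hdetA; exact one_ne_zero hdetA.symm
  have ha11 : a 1 1 ≠ 0 := by
    intro h; rw [h, mul_zero] at hdetA; exact one_ne_zero hdetA.symm
  have e00 := congrFun (congrFun hc 0) 0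
  have e01 := congrFun (congrFun hc 0) 1
  have e11 := congrFun (congrFun hc 1) 1
  simp [Matrix.mul_apply, Fin.sum_univ_two, ha01, ha10] at e00 e01 e11
  have hb00 : b 0 0 = 0 := by
    have h2 : (2 : ℂ) * (a 0 0 * b 0 0) = 0 := by linear_combination e00
    rcases mul_eq_zero.1 h2 with h | h
    · norm_num at h
    · rcases mul_eq_zero.1 h with h | h
      · exact absurd h ha00
      · exact h
  have hb11 : b 1 1 = 0 := by
    have h2 : (2 : ℂ) * (a 1 1 * b 1 1) = 0 := by linear_combination e11
    rcases mul_eq_zero.1 h2 with h | h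
    · norm_num at h
    · rcases mul_eq_zero.1 h with h | h
      · exact absurd h ha11
      · exact h
  have hb01 : b 0 1 ≠ 0 := by
    intro h
    rw [Matrix.det_fin_two, hb00, hb11, h] at hdetB
    simp at hdetB
  have hsum : a 0 0 + a 1 1 = 0 := by
    have h2 : (a 0 0 + a 1 1) * b 0 1 = 0 := by linear_combination e01
    rcases mul_eq_zero.1 h2 with h | h
    · exact h
    · exact absurd h hb01
  have ha11eq : a 1 1 = -(a 0 0) := by linear_combination hsum
  have hsq : a 0 0 * a 0 0 = -1 := by
    rw [ha11eq] at hdetA; linear_combination -hdetA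
  have hI : Complex.exp (2 * Real.pi * Complex.I / ((4:ℕ):ℂ)) = Complex.I := by
    have h4 : (2 * Real.pi * Complex.I / ((4:ℕ):ℂ)) = (↑(Real.pi/2)) * Complex.I := by
      push_cast; ring
    rw [h4, Complex.exp_mul_I, ← Complex.ofReal_cos, ← Complex.ofReal_sin,
      Real.cos_pi_div_two, Real.sin_pi_div_two]
    simp
  have hI' : Complex.exp (-(2 * Real.pi * Complex.I / ((4:ℕ):ℂ))) = -Complex.I := by
    rw [Complex.exp_neg, hI, Complex.inv_I]
  have hξ : ((ξ 4 : SU2) : Matrix (Fin 2) (Fin 2) ℂ) = !![Complex.I, 0; 0, -Complex.I] := by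
    show !![Complex.exp (2 * Real.pi * Complex.I / ((4:ℕ):ℂ)), 0; 0,
      Complex.exp (-(2 * Real.pi * Complex.I / ((4:ℕ):ℂ)))] = _
    rw [hI, hI']
  have hcases : a 0 0 = Complex.I ∨ a 0 0 = -Complex.I := by
    have h2 : (a 0 0 - Complex.I) * (a 0 0 + Complex.I) = 0 := by
      have hii : Complex.I * Complex.I = -1 := Complex.I_mul_I
      linear_combination hsq - hii
    rcases mul_eq_zero.1 h2 with h | h
    · left; linear_combination h
    · right; linear_combination h
  refine ⟨?_, hb00, hb11⟩
  rcases hcases with h | h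
  · left
    rw [hξ]
    show a = _
    ext i j
    fin_cases i <;> fin_cases j <;> simp [ha01, ha10, h, ha11eq]
  · right
    rw [hξ]
    show a = _
    ext i j
    fin_cases i <;> fin_cases j <;> simp [ha01, ha10, h, ha11eq]

end
end

section
/- Let q ≥ 2 and n ≥ 1. The map from (S¹)^n × Hom(F_n/Γ^{q+1}_n, SU(2)) to Hom(F_n/Γ^{q+1}_n, U(2)) sending ((λ_1, …, λ_n), (x_1, …, x_n)) to (λ_1·x_1, …, λ_n·x_n) is a continuous surjection, and it descends to a homeomorphism from the quotient of (S¹)^n × Hom(F_n/Γ^{q+1}_n, SU(2)) by the action of {±1}^n, where ε = (ε_1, …, ε_n) acts by ε·((λ_i), (x_i)) = ((ε_i λ_i), (ε_i x_i)), onto Hom(F_n/Γ^{q+1}_n, U(2)). -/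
/-!
Multiplying a generator by a scalar `λ ∈ S¹` multiplies it by a central element of `U(2)`, and
central factors do not change commutators; hence `(λᵢ xᵢ)` and `(xᵢ)` generate subgroups whose lower
central series agree from `Γ²` on, and for `q ≥ 1` the two nilpotency conditions coincide. Every
`u ∈ U(2)` is `λ x` with `λ² = det u`, and `λ x = λ' x'` forces `(λ / λ')² = 1` by taking
determinants, so the fibres of the map are exactly the `{±1}ⁿ`-orbits. Finally the map is the
restriction of `(S¹)ⁿ × SU(2)ⁿ → U(2)ⁿ` to the preimage of the nilpotent tuples; the ambient map is
closed because `SU(2)` is compact, so the restriction is a closed continuous surjection, hence a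
quotient map.
-/

open Matrix Complex

noncomputable section

abbrev U2 := Matrix.unitaryGroup (Fin 2) ℂ

/-- `Hom(F_n/Γ^{q+1}_n, SU(2))`: tuples generating a subgroup of nilpotency class at most `q`. -/
abbrev NilSU2 (n q : ℕ) : Type :=
  {x : Fin n → SU2 // lcs (Subgroup.closure (Set.range x)) q = ⊥}

/-- `Hom(F_n/Γ^{q+1}_n, U(2))`. -/
abbrev NilU2 (n q : ℕ) : Type :=
  {x : Fin n → U2 // lcs (Subgroup.closure (Set.range x)) q = ⊥}

/-- The relation identifying `((λ_i), (x_i))` with `((ε_i λ_i), (ε_i x_i))` for signs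
`ε ∈ {±1}^n`. -/
def signRel (n q : ℕ) (p p' : (Fin n → Circle) × NilSU2 n q) : Prop :=
  ∃ ε : Fin n → ℤˣ,
    (∀ i, (p'.1 i : ℂ) = ((ε i : ℤ) : ℂ) * (p.1 i : ℂ)) ∧
    (∀ i, ((p'.2.1 i : Matrix (Fin 2) (Fin 2) ℂ)) =
      ((ε i : ℤ) : ℂ) • (p.2.1 i : Matrix (Fin 2) (Fin 2) ℂ))

open Topology Set
open scoped commutatorElement

namespace Subgroup

variable {G : Type*} [Group G]

theorem commutator_sup_center_right (A H : Subgroup G) : ⁅A, H ⊔ center G⁆ = ⁅A, H⁆ := by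
  refine le_antisymm (commutator_le.2 fun a ha g hg => ?_) (commutator_mono le_rfl le_sup_left)
  obtain ⟨h, hh, z, hz, rfl⟩ := mem_sup_of_normal_right.1 hg
  have hza : z * a⁻¹ = a⁻¹ * z := (mem_center_iff.1 hz a⁻¹).symm
  have : ⁅a, h * z⁆ = ⁅a, h⁆ := by
    simp only [commutatorElement_def, _root_.mul_inv_rev, ← mul_assoc, mul_assoc _ z a⁻¹, hza]
    group
  exact this ▸ commutator_mem_commutator ha hh

theorem lcs_succ_eq_of_sup_center_eq {H H' : Subgroup G} (h : H ⊔ center G = H' ⊔ center G)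
    (k : ℕ) : lcs H (k + 1) = lcs H' (k + 1) := by
  have hA : ∀ A : Subgroup G, ⁅A, H⁆ = ⁅A, H'⁆ := fun A => by
    rw [← commutator_sup_center_right A H, h, commutator_sup_center_right]
  induction k with
  | zero => exact (hA H).trans ((commutator_comm _ _).trans ((hA H').trans (commutator_comm _ _)))
  | succ k ih => exact (congrArg (⁅·, H⁆) ih).trans (hA _)

theorem closure_range_mul_sup_center {ι : Type*} (z x : ι → G) (hz : ∀ i, z i ∈ center G) :
    closure (range fun i => z i * x i) ⊔ center G = closure (range x) ⊔ center G := by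
  refine le_antisymm (sup_le ((closure_le _).2 ?_) le_sup_right)
    (sup_le ((closure_le _).2 ?_) le_sup_right) <;> rintro _ ⟨i, rfl⟩
  · exact mul_mem (mem_sup_right (hz i)) (mem_sup_left (subset_closure ⟨i, rfl⟩))
  · rw [← inv_mul_cancel_left (z i) (x i)]
    exact mul_mem (mem_sup_right (inv_mem (hz i))) (mem_sup_left (subset_closure ⟨i, rfl⟩))

theorem lcs_map {G' : Type*} [Group G'] (φ : G →* G') (H : Subgroup G) (k : ℕ) :
    lcs (H.map φ) k = (lcs H k).map φ := by
  induction k with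
  | zero => rfl
  | succ k ih => exact (congrArg (⁅·, H.map φ⁆) ih).trans (map_commutator _ _ _).symm

end Subgroup

theorem Topology.IsQuotientMap.exists_homeomorph_quot {X Y : Type*} [TopologicalSpace X]
    [TopologicalSpace Y] {f : X → Y} (hf : IsQuotientMap f) {r : X → X → Prop}
    (hr : ∀ a b, r a b ↔ f a = f b) : ∃ h : Quot r ≃ₜ Y, ∀ x, h (Quot.mk r x) = f x :=
  ⟨(Homeomorph.Quot.congrRight hr).trans (hf.homeomorph (f := ⟨f, hf.continuous⟩)), fun _ => rfl⟩

theorem IsClosedMap.codRestrict_of_isInducing {A X Y : Type*} [TopologicalSpace A]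
    [TopologicalSpace X] [TopologicalSpace Y] {ι : A → X} {Φ : X → Y} {t : Set Y} {g : A → t}
    (hΦ : IsClosedMap Φ) (hι : IsInducing ι) (hrange : range ι = Φ ⁻¹' t)
    (hg : ∀ a, (g a : Y) = Φ (ι a)) : IsClosedMap g := by
  intro K hK
  obtain ⟨V, hV, rfl⟩ := hι.isClosed_iff.1 hK
  suffices g '' (ι ⁻¹' V) = Subtype.val ⁻¹' (Φ '' V) from
    this ▸ (hΦ V hV).preimage continuous_subtype_val
  ext y
  constructor
  · rintro ⟨a, ha, rfl⟩
    exact ⟨ι a, ha, (hg a).symm⟩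
  · rintro ⟨v, hv, hvy⟩
    obtain ⟨a, rfl⟩ : v ∈ range ι := hrange ▸ (show Φ v ∈ t from hvy ▸ y.2)
    exact ⟨a, hv, Subtype.ext ((hg a).trans hvy)⟩

namespace Matrix

variable {n 𝕜 : Type*} [Fintype n] [DecidableEq n] [RCLike 𝕜]

theorem isCompact_unitaryGroup : IsCompact (unitaryGroup n 𝕜 : Set (Matrix n n 𝕜)) := by
  have hclosed : IsClosed (unitaryGroup n 𝕜 : Set (Matrix n n 𝕜)) := isClosed_unitary
  open scoped Matrix.Norms.Elementwise in
  exact Metric.isCompact_of_isClosed_isBounded hclosed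
    ((Metric.isBounded_closedBall (x := 0) (r := 1)).subset fun U hU =>
      mem_closedBall_zero_iff.2 (entrywise_sup_norm_bound_of_unitary hU))

theorem isCompact_specialUnitaryGroup :
    IsCompact (specialUnitaryGroup n 𝕜 : Set (Matrix n n 𝕜)) :=
  isCompact_unitaryGroup.of_isClosed_subset
    (isClosed_unitary.inter (isClosed_eq continuous_id.matrix_det continuous_const))
    specialUnitaryGroup_le_unitaryGroup

instance : CompactSpace (specialUnitaryGroup n 𝕜) :=
  isCompact_iff_compactSpace.1 isCompact_specialUnitaryGroup

theorem UnitaryGroup.norm_det (u : unitaryGroup n 𝕜) : ‖(u : Matrix n n 𝕜).det‖ = 1 :=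
  CStarRing.norm_of_mem_unitary (det_of_mem_unitary u.2)

end Matrix

theorem Circle.coe_mem_unitary (c : Circle) : (c : ℂ) ∈ unitary ℂ := by
  rw [Unitary.mem_iff_star_mul_self, Complex.star_def, ← Circle.coe_inv_eq_conj, ← Circle.coe_mul,
    inv_mul_cancel, Circle.coe_one]

theorem Circle.exists_sq_eq (z : Circle) : ∃ c : Circle, c ^ 2 = z :=
  ⟨Circle.exp (arg z / 2), by
    rw [← Circle.exp_natCast_mul, Nat.cast_ofNat, mul_div_cancel₀ _ two_ne_zero, Circle.exp_arg]⟩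

def SU2.toU2 : SU2 →* U2 := Submonoid.inclusion specialUnitaryGroup_le_unitaryGroup

def circleSMul (c : Circle) (x : SU2) : U2 :=
  ⟨(c : ℂ) • x.1,
    Unitary.smul_mem_of_mem c.coe_mem_unitary (specialUnitaryGroup_le_unitaryGroup x.2)⟩

theorem continuous_circleSMul : Continuous fun p : Circle × SU2 => circleSMul p.1 p.2 :=
  ((continuous_subtype_val.comp continuous_fst).smul
    (continuous_subtype_val.comp continuous_snd)).subtype_mk _

theorem circleSMul_one_mem_center (c : Circle) : circleSMul c 1 ∈ Subgroup.center U2 :=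
  Subgroup.mem_center_iff.2 fun g => Subtype.ext <| by
    change g.1 * ((c : ℂ) • 1) = ((c : ℂ) • 1) * g.1
    rw [mul_smul_one, smul_one_mul]

theorem circleSMul_eq_mul (c : Circle) (x : SU2) : circleSMul c x = circleSMul c 1 * SU2.toU2 x :=
  Subtype.ext (smul_one_mul _ _).symm

theorem circleSMul_eq_circleSMul_iff {c c' : Circle} {x x' : SU2} :
    circleSMul c x = circleSMul c' x' ↔
      ∃ ε : ℤˣ, (c' : ℂ) = ((ε : ℤ) : ℂ) * c ∧
        (x' : Matrix (Fin 2) (Fin 2) ℂ) = ((ε : ℤ) : ℂ) • (x : Matrix (Fin 2) (Fin 2) ℂ) := by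
  constructor
  · intro h
    have hx : (x' : Matrix (Fin 2) (Fin 2) ℂ) = ((c : ℂ) / c') • x.1 := by
      have hv : (c : ℂ) • x.1 = (c' : ℂ) • x'.1 := congrArg Subtype.val h
      rw [div_eq_inv_mul, mul_smul, hv, inv_smul_smul₀ c'.coe_ne_zero]
    have hsq : ((c : ℂ) / c') ^ 2 = 1 := by
      simpa [det_smul, (mem_specialUnitaryGroup_iff.1 x.2).2,
        (mem_specialUnitaryGroup_iff.1 x'.2).2] using (congrArg det hx).symm
    obtain ⟨ε, hε⟩ : ∃ ε : ℤˣ, ((ε : ℤ) : ℂ) = (c : ℂ) / c' := by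
      rcases sq_eq_one_iff.1 hsq with h1 | h1
      exacts [⟨1, by simp [h1]⟩, ⟨-1, by simp [h1]⟩]
    refine ⟨ε, ?_, hε ▸ hx⟩
    calc (c' : ℂ) = ((c : ℂ) / c') ^ 2 * c' := by rw [hsq, one_mul]
      _ = _ := by rw [hε]; field_simp [c'.coe_ne_zero]
  · rintro ⟨ε, hc, hx⟩
    have hε : ((ε : ℤ) : ℂ) * ((ε : ℤ) : ℂ) = 1 := by
      rw [← Int.cast_mul, ← Units.val_mul, Int.units_mul_self, Units.val_one, Int.cast_one]
    refine Subtype.ext ?_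
    change (c : ℂ) • x.1 = (c' : ℂ) • x'.1
    rw [hc, hx, smul_smul, mul_assoc, mul_comm, mul_assoc, hε, mul_one]

theorem exists_circleSMul_eq (u : U2) : ∃ c x, circleSMul c x = u := by
  obtain ⟨c, hc⟩ := Circle.exists_sq_eq ⟨_, mem_sphere_zero_iff_norm.2 (UnitaryGroup.norm_det u)⟩
  have hdet : (((c⁻¹ : Circle) : ℂ) • u.1).det = 1 := by
    rw [det_smul, Fintype.card_fin, Circle.coe_inv, inv_pow, ← Circle.coe_pow, hc]
    exact inv_mul_cancel₀ (Circle.coe_ne_zero _)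
  refine ⟨c, ⟨_, mem_specialUnitaryGroup_iff.2 ⟨Unitary.smul_mem_of_mem
    (c⁻¹).coe_mem_unitary u.2, hdet⟩⟩, Subtype.ext ?_⟩
  change (c : ℂ) • ((c⁻¹ : Circle) : ℂ) • u.1 = u.1
  rw [smul_smul, ← Circle.coe_mul, mul_inv_cancel, Circle.coe_one, one_smul]

def circleSMulTuple {ι : Type*} (p : (ι → Circle) × (ι → SU2)) : ι → U2 :=
  fun i => circleSMul (p.1 i) (p.2 i)

theorem continuous_circleSMulTuple {ι : Type*} :
    Continuous (circleSMulTuple : (ι → Circle) × (ι → SU2) → ι → U2) :=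
  continuous_pi fun i => continuous_circleSMul.comp
    (f := fun p : (ι → Circle) × (ι → SU2) => (p.1 i, p.2 i)) (by fun_prop)

theorem lcs_closure_range_circleSMulTuple_eq_bot_iff {ι : Type*} {q : ℕ} (hq : q ≠ 0)
    (p : (ι → Circle) × (ι → SU2)) :
    lcs (Subgroup.closure (range (circleSMulTuple p))) q = ⊥ ↔
      lcs (Subgroup.closure (range p.2)) q = ⊥ := by
  obtain ⟨k, rfl⟩ := Nat.exists_eq_add_one_of_ne_zero hq
  have hp : circleSMulTuple p = fun i => circleSMul (p.1 i) 1 * SU2.toU2 (p.2 i) :=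
    funext fun i => circleSMul_eq_mul _ _
  rw [hp, Subgroup.lcs_succ_eq_of_sup_center_eq (Subgroup.closure_range_mul_sup_center _ _
      fun i => circleSMul_one_mem_center (p.1 i)),
    show range (fun i => SU2.toU2 (p.2 i)) = SU2.toU2 '' range p.2 from range_comp _ _,
    ← MonoidHom.map_closure, Subgroup.lcs_map]
  exact Subgroup.map_eq_bot_iff_of_injective _ (Submonoid.inclusion_injective _)

theorem signRel_iff (n q : ℕ) (p p' : (Fin n → Circle) × NilSU2 n q) :
    signRel n q p p' ↔ circleSMulTuple (p.1, p.2.1) = circleSMulTuple (p'.1, p'.2.1) := by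
  simp only [signRel, circleSMulTuple, funext_iff, circleSMul_eq_circleSMul_iff,
    Classical.skolem, forall_and]

theorem stmt15_general (q n : ℕ) (hq : 2 ≤ q) :
    ∃ f : (Fin n → Circle) × NilSU2 n q → NilU2 n q,
      (∀ lam : Fin n → Circle, ∀ x : NilSU2 n q, ∀ i,
        ((f (lam, x)).1 i : Matrix (Fin 2) (Fin 2) ℂ) =
          (lam i : ℂ) • (x.1 i : Matrix (Fin 2) (Fin 2) ℂ)) ∧
      Continuous f ∧ Function.Surjective f ∧
      ∃ h : Quot (signRel n q) ≃ₜ NilU2 n q, ∀ p, h (Quot.mk _ p) = f p := by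
  have hnil := lcs_closure_range_circleSMulTuple_eq_bot_iff (ι := Fin n) (q := q) (by omega)
  let f : (Fin n → Circle) × NilSU2 n q → NilU2 n q :=
    fun p => ⟨circleSMulTuple (p.1, p.2.1), (hnil _).2 p.2.2⟩
  have hf : Continuous f :=
    (continuous_circleSMulTuple.comp (continuous_id.prodMap continuous_subtype_val)).subtype_mk _
  have hsurj : Function.Surjective f := by
    rintro ⟨u, hu⟩
    choose c x hcx using fun i => exists_circleSMul_eq (u i)
    have hu' : circleSMulTuple (c, x) = u := funext hcx
    exact ⟨(c, ⟨x, (hnil (c, x)).1 (by rw [hu']; exact hu)⟩), Subtype.ext hu'⟩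
  have hrange : range (Prod.map id (Subtype.val : NilSU2 n q → Fin n → SU2)) =
      circleSMulTuple ⁻¹' {u : Fin n → U2 | lcs (Subgroup.closure (range u)) q = ⊥} := by
    ext p
    simp [range_prodMap, hnil]
  have hclosed : IsClosedMap f :=
    continuous_circleSMulTuple.isClosedMap.codRestrict_of_isInducing
      (IsInducing.id.prodMap IsInducing.subtypeVal) hrange fun _ => rfl
  obtain ⟨h, hh⟩ := (hclosed.isQuotientMap hf hsurj).exists_homeomorph_quot
    fun p p' => (signRel_iff n q p p').trans ⟨fun h => Subtype.ext h, congrArg Subtype.val⟩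
  exact ⟨f, fun _ _ _ => rfl, hf, hsurj, h, hh⟩

/-- For `q ≥ 2`, `n ≥ 1`, the map
`(S¹)^n × Hom(F_n/Γ^{q+1}_n, SU(2)) → Hom(F_n/Γ^{q+1}_n, U(2))`,
`((λ_i), (x_i)) ↦ (λ_i x_i)`, is a continuous surjection which descends to a homeomorphism from
the quotient by the `{±1}^n`-action. -/
theorem stmt15 (q n : ℕ) (hq : 2 ≤ q) (hn : 1 ≤ n) :
    ∃ f : (Fin n → Circle) × NilSU2 n q → NilU2 n q,
      (∀ lam : Fin n → Circle, ∀ x : NilSU2 n q, ∀ i,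
        ((f (lam, x)).1 i : Matrix (Fin 2) (Fin 2) ℂ) =
          (lam i : ℂ) • (x.1 i : Matrix (Fin 2) (Fin 2) ℂ)) ∧
      Continuous f ∧ Function.Surjective f ∧
      ∃ h : Quot (signRel n q) ≃ₜ NilU2 n q, ∀ p, h (Quot.mk _ p) = f p :=
  stmt15_general q n hq
end
end

section
/- Let m ≥ 1 and let (x_1, …, x_n) be an n-tuple in U(m) generating a subgroup of nilpotency class ≤ 2. Then there exist g ∈ U(m) and an equivalence relation ∼ on the index set {1, …, m} such that: (i) for every k, the matrix g x_k g⁻¹ is block with respect to ∼, i.e., its (i,j)-entry is 0 whenever i ≁ j; and (ii) for all i, j, the conjugated commutator g [x_i, x_j] g⁻¹ is a diagonal matrix whose diagonal entries are constant on each equivalence class of ∼ (i.e., it lies in the center Z of the block subgroup determined by ∼). -/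
/-!
Because the subgroup generated by the `x k` has class at most 2, every commutator
`z = ⁅x k, x l⁆` is central in it, so the `z` commute with each other and with every `x k`, and so
do their adjoints `star z = z⁻¹`. Hence the real and imaginary parts `ℜ z`, `ℑ z` form a commuting
family of Hermitian matrices, which one unitary diagonalizes simultaneously, and every `x k`,
commuting with that family, preserves its joint eigenspaces. Calling two basis vectors equivalent
when they lie in the same joint eigenspace, the conjugated `x k` are block diagonal and every
conjugated `z = ℜ z + I • ℑ z` is diagonal and constant on blocks.
-/

open Matrix
open scoped commutatorElement

noncomputable section

open Module.End ComplexStarModule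
open scoped Function

section CartesianParts

variable {A ι : Type*} [Ring A] [StarRing A] [Algebra ℂ A] [StarModule ℂ A]

theorem Commute.realPart_right {a b : A} (h : Commute a b) (hs : Commute a (star b)) :
    Commute a (ℜ b : A) := by
  rw [realPart_apply_coe]
  exact (h.add_right hs).smul_right _

theorem Commute.imaginaryPart_right {a b : A} (h : Commute a b) (hs : Commute a (star b)) :
    Commute a (ℑ b : A) := by
  rw [imaginaryPart_apply_coe]
  exact ((h.sub_right hs).smul_right _).smul_right _

def cartesianParts (z : ι → A) : ι ⊕ ι → A :=
  Sum.elim (fun p => (ℜ (z p) : A)) (fun p => (ℑ (z p) : A))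

theorem isSelfAdjoint_cartesianParts (z : ι → A) (i : ι ⊕ ι) :
    IsSelfAdjoint (cartesianParts z i) := by
  cases i
  exacts [(ℜ _).2, (ℑ _).2]

theorem Commute.cartesianParts_right {a : A} {z : ι → A}
    (h : ∀ p, Commute a (z p) ∧ Commute a (star (z p))) (i : ι ⊕ ι) :
    Commute a (cartesianParts z i) := by
  cases i with
  | inl p => exact (h p).1.realPart_right (h p).2
  | inr p => exact (h p).1.imaginaryPart_right (h p).2

theorem commute_cartesianParts {z : ι → A}
    (h : ∀ p q, Commute (z p) (z q) ∧ Commute (z p) (star (z q))) (i j : ι ⊕ ι) :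
    Commute (cartesianParts z i) (cartesianParts z j) := by
  refine Commute.cartesianParts_right (fun q => ⟨?_, ?_⟩) j
  · exact (Commute.cartesianParts_right (h q) i).symm
  · exact (Commute.cartesianParts_right (fun p => ⟨(h p q).2.symm, (h q p).1.star_star⟩) i).symm

theorem cartesianParts_inl_add_I_smul_inr (z : ι → A) (p : ι) :
    cartesianParts z (.inl p) + Complex.I • cartesianParts z (.inr p) = z p :=
  realPart_add_I_smul_imaginaryPart (z p)

end CartesianParts

namespace LinearMap.IsSymmetric

variable {𝕜 E ι : Type*} [RCLike 𝕜] [NormedAddCommGroup E] [InnerProductSpace 𝕜 E]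
  {T : ι → Module.End 𝕜 E}

theorem inner_apply_eq_zero_of_mem_iInf_eigenspace (hT : ∀ i, (T i).IsSymmetric)
    {S : Module.End 𝕜 E} (hS : ∀ i, Commute (T i) S) {χ χ' : ι → 𝕜} (hχ : χ ≠ χ')
    {v w : E} (hv : v ∈ ⨅ i, eigenspace (T i) (χ i)) (hw : w ∈ ⨅ i, eigenspace (T i) (χ' i)) :
    inner 𝕜 v (S w) = 0 := by
  have hSw : S w ∈ ⨅ i, eigenspace (T i) (χ' i) := by
    simp only [Submodule.mem_iInf] at hw ⊢
    exact fun i => mapsTo_genEigenspace_of_comm (hS i) (χ' i) 1 (hw i)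
  simpa using orthogonalFamily_iInf_eigenspaces hT hχ ⟨v, hv⟩ ⟨S w, hSw⟩

theorem exists_orthonormalBasis_mem_iInf_eigenspace [FiniteDimensional 𝕜 E] {κ : Type*}
    [Fintype κ] (hκ : Module.finrank 𝕜 E = Fintype.card κ) (hT : ∀ i, (T i).IsSymmetric)
    (hC : Pairwise (Commute on T)) :
    ∃ (b : OrthonormalBasis κ 𝕜 E) (χ : κ → ι → 𝕜),
      ∀ a, b a ∈ ⨅ i, eigenspace (T i) (χ a i) := by
  classical
  set W : (ι → 𝕜) → Submodule 𝕜 E := fun χ => ⨅ i, eigenspace (T i) (χ i)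
  have hW : DirectSum.IsInternal W := directSum_isInternal_of_pairwise_commute hT hC
  -- a subordinate orthonormal basis needs finitely many summands: keep the nonzero ones
  have : Fintype {χ // W χ ≠ ⊥} :=
    (WellFoundedGT.finite_ne_bot_of_iSupIndep hW.submodule_iSupIndep).fintype
  have hW' := DirectSum.isInternal_ne_bot_iff.mpr hW
  have hO := (orthogonalFamily_iInf_eigenspaces hT).comp
    (Subtype.val_injective : Function.Injective (Subtype.val : {χ // W χ ≠ ⊥} → ι → 𝕜))
  set e := Fintype.equivFin κ
  refine ⟨(hW'.subordinateOrthonormalBasis hκ hO).reindex e.symm,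
    fun a => (hW'.subordinateOrthonormalBasisIndex hκ (e a) hO).1, fun a => ?_⟩
  rw [OrthonormalBasis.reindex_apply, Equiv.symm_symm]
  exact hW'.subordinateOrthonormalBasis_subordinate hκ (e a) hO

end LinearMap.IsSymmetric

namespace OrthonormalBasis

variable {𝕜 n : Type*} [RCLike 𝕜] [Fintype n] [DecidableEq n]

def toUnitary (b : OrthonormalBasis n 𝕜 (EuclideanSpace 𝕜 n)) : unitaryGroup n 𝕜 :=
  ⟨(EuclideanSpace.basisFun n 𝕜).toBasis.toMatrix b,
    (EuclideanSpace.basisFun n 𝕜).toMatrix_orthonormalBasis_mem_unitary b⟩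

theorem star_toUnitary_mul_mul_toUnitary_apply (b : OrthonormalBasis n 𝕜 (EuclideanSpace 𝕜 n))
    (A : Matrix n n 𝕜) (a c : n) :
    (star (b.toUnitary : Matrix n n 𝕜) * A * b.toUnitary) a c =
      inner 𝕜 (b a) (toEuclideanLin A (b c)) := by
  rw [Matrix.mul_assoc]
  simp only [Matrix.mul_apply, Matrix.star_apply, PiLp.inner_apply, RCLike.inner_apply,
    toLpLin_apply, mulVec, dotProduct, RCLike.star_def]
  exact Finset.sum_congr rfl fun _ _ => mul_comm _ _

end OrthonormalBasis

namespace Matrix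

variable {n ι : Type*} [Fintype n] [DecidableEq n]

theorem exists_unitary_conj_diagonal_of_isHermitian {𝕜 : Type*} [RCLike 𝕜]
    {A : ι → Matrix n n 𝕜} (hA : ∀ i, (A i).IsHermitian) (hC : Pairwise (Commute on A)) :
    ∃ (u : unitaryGroup n 𝕜) (χ : n → ι → 𝕜),
      (∀ i, star (u : Matrix n n 𝕜) * A i * u = diagonal fun a => χ a i) ∧
      ∀ B : Matrix n n 𝕜, (∀ i, Commute (A i) B) →
        ∀ a c, χ a ≠ χ c → (star (u : Matrix n n 𝕜) * B * u) a c = 0 := by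
  have hT : ∀ i, (toEuclideanLin (A i)).IsSymmetric := fun i =>
    isSymmetric_toEuclideanLin_iff.mpr (hA i)
  have hcomm {B C : Matrix n n 𝕜} (h : Commute B C) :
      Commute (toEuclideanLin B) (toEuclideanLin C) :=
    h.map (toLpLinAlgEquiv 2)
  obtain ⟨b, χ, hb⟩ := LinearMap.IsSymmetric.exists_orthonormalBasis_mem_iInf_eigenspace
    finrank_euclideanSpace hT fun i j hij => hcomm (hC hij)
  have heig (a : n) (i : ι) : toEuclideanLin (A i) (b a) = χ a i • b a :=
    mem_eigenspace_iff.mp ((Submodule.mem_iInf _).mp (hb a) i)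
  refine ⟨b.toUnitary, χ, fun i => ?_, fun B hB a c hac => ?_⟩
  · ext a c
    rw [b.star_toUnitary_mul_mul_toUnitary_apply, heig, inner_smul_right,
      orthonormal_iff_ite.mp b.orthonormal, diagonal_apply]
    split_ifs with h
    · rw [h, mul_one]
    · rw [mul_zero]
  · rw [b.star_toUnitary_mul_mul_toUnitary_apply]
    exact LinearMap.IsSymmetric.inner_apply_eq_zero_of_mem_iInf_eigenspace hT
      (fun i => hcomm (hB i)) hac (hb a) (hb c)

theorem exists_unitary_conj_diagonal_of_commute_star {Z : ι → Matrix n n ℂ}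
    (hZ : ∀ p q, Commute (Z p) (Z q) ∧ Commute (Z p) (star (Z q))) :
    ∃ (u : unitaryGroup n ℂ) (χ : n → ι ⊕ ι → ℂ),
      (∀ p, star (u : Matrix n n ℂ) * Z p * u =
        diagonal fun a => χ a (.inl p) + Complex.I * χ a (.inr p)) ∧
      ∀ B : Matrix n n ℂ, (∀ p, Commute B (Z p) ∧ Commute B (star (Z p))) →
        ∀ a c, χ a ≠ χ c → (star (u : Matrix n n ℂ) * B * u) a c = 0 := by
  obtain ⟨u, χ, hdiag, hblock⟩ := exists_unitary_conj_diagonal_of_isHermitian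
    (fun i => isHermitian_iff_isSelfAdjoint.mpr (isSelfAdjoint_cartesianParts Z i))
    fun i j _ => commute_cartesianParts hZ i j
  refine ⟨u, χ, fun p => ?_, fun B hB => hblock B fun i => (Commute.cartesianParts_right hB i).symm⟩
  rw [← cartesianParts_inl_add_I_smul_inr Z p, Matrix.mul_add, Matrix.add_mul, mul_smul_comm,
    smul_mul_assoc, hdiag, hdiag]
  ext a c
  by_cases h : a = c <;> simp [h]

end Matrix

theorem Subgroup.commutatorElement_mem {G : Type*} [Group G] (H : Subgroup G) {a b : G}
    (ha : a ∈ H) (hb : b ∈ H) : ⁅a, b⁆ ∈ H := by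
  rw [commutatorElement_def]
  exact H.mul_mem (H.mul_mem (H.mul_mem ha hb) (H.inv_mem ha)) (H.inv_mem hb)

theorem commute_commutatorElement_of_lcs_two_eq_bot {G : Type*} [Group G] {H : Subgroup G}
    (hH : lcs H 2 = ⊥) {a b c : G} (ha : a ∈ H) (hb : b ∈ H) (hc : c ∈ H) :
    Commute c ⁅a, b⁆ :=
  Subgroup.mem_centralizer_iff.mp (Subgroup.commutator_eq_bot_iff_le_centralizer.mp hH
    (Subgroup.commutator_mem_commutator ha hb)) c hc

theorem Unitary.commute_coe_of_commute {A : Type*} [Monoid A] [StarMul A] {u v : unitary A}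
    (h : Commute u v) : Commute (u : A) v ∧ Commute (u : A) (star (v : A)) := by
  rw [← Unitary.coe_star, Unitary.star_eq_inv]
  exact ⟨congrArg Subtype.val h, congrArg Subtype.val h.inv_right⟩

theorem stmt16_general (m n : ℕ) (x : Fin n → Matrix.unitaryGroup (Fin m) ℂ)
    (hx : lcs (Subgroup.closure (Set.range x)) 2 = ⊥) :
    ∃ (g : Matrix.unitaryGroup (Fin m) ℂ) (R : Fin m → Fin m → Prop), Equivalence R ∧
      (∀ k, ∀ i j, ¬ R i j →
        ((g * x k * g⁻¹ : Matrix.unitaryGroup (Fin m) ℂ) : Matrix (Fin m) (Fin m) ℂ) i j = 0) ∧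
      (∀ k l,
        (∀ i j, i ≠ j →
          ((g * ⁅x k, x l⁆ * g⁻¹ : Matrix.unitaryGroup (Fin m) ℂ) : Matrix (Fin m) (Fin m) ℂ) i j
            = 0) ∧
        (∀ i j, R i j →
          ((g * ⁅x k, x l⁆ * g⁻¹ : Matrix.unitaryGroup (Fin m) ℂ) : Matrix (Fin m) (Fin m) ℂ) i i
            = ((g * ⁅x k, x l⁆ * g⁻¹ : Matrix.unitaryGroup (Fin m) ℂ) : Matrix (Fin m) (Fin m) ℂ)
                j j)) := by
  set H := Subgroup.closure (Set.range x)
  have hxH (k : Fin n) : x k ∈ H := Subgroup.subset_closure ⟨k, rfl⟩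
  set Z : Fin n × Fin n → Matrix (Fin m) (Fin m) ℂ := fun p => ↑⁅x p.1, x p.2⁆
  have hZ (p : Fin n × Fin n) {y : unitaryGroup (Fin m) ℂ} (hy : y ∈ H) :
      Commute (y : Matrix (Fin m) (Fin m) ℂ) (Z p) ∧
        Commute (y : Matrix (Fin m) (Fin m) ℂ) (star (Z p)) :=
    Unitary.commute_coe_of_commute
      (commute_commutatorElement_of_lcs_two_eq_bot hx (hxH p.1) (hxH p.2) hy)
  obtain ⟨u, χ, hdiag, hblock⟩ := exists_unitary_conj_diagonal_of_commute_star
    (Z := Z) fun p q => hZ q (H.commutatorElement_mem (hxH p.1) (hxH p.2))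
  have hconj (w : unitaryGroup (Fin m) ℂ) :
      ((u⁻¹ * w * u⁻¹⁻¹ : unitaryGroup (Fin m) ℂ) : Matrix (Fin m) (Fin m) ℂ) =
        star (u : Matrix (Fin m) (Fin m) ℂ) * w * u := by
    rw [inv_inv, ← Unitary.star_eq_inv]
    rfl
  refine ⟨u⁻¹, fun a c => χ a = χ c, ⟨fun _ => rfl, Eq.symm, Eq.trans⟩,
    fun k a c hac => ?_, fun k l => ⟨fun a c hac => ?_, fun a c hac => ?_⟩⟩
  · rw [hconj]
    exact hblock _ (fun p => hZ p (hxH k)) a c hac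
  · rw [hconj, hdiag (k, l), diagonal_apply_ne _ hac]
  · rw [hconj, hdiag (k, l), diagonal_apply_eq, diagonal_apply_eq, hac]

/-- Any `n`-tuple in `U(m)` generating a subgroup of nilpotency class at most 2 can be
simultaneously conjugated so that all entries are block matrices with respect to a common
equivalence relation on indices, and all commutators become diagonal matrices constant on each
block (i.e. lie in the center of the block subgroup). -/
theorem stmt16 (m n : ℕ) (hm : 1 ≤ m) (x : Fin n → Matrix.unitaryGroup (Fin m) ℂ)
    (hx : lcs (Subgroup.closure (Set.range x)) 2 = ⊥) :
    ∃ (g : Matrix.unitaryGroup (Fin m) ℂ) (R : Fin m → Fin m → Prop), Equivalence R ∧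
      (∀ k, ∀ i j, ¬ R i j →
        ((g * x k * g⁻¹ : Matrix.unitaryGroup (Fin m) ℂ) : Matrix (Fin m) (Fin m) ℂ) i j = 0) ∧
      (∀ k l,
        (∀ i j, i ≠ j →
          ((g * ⁅x k, x l⁆ * g⁻¹ : Matrix.unitaryGroup (Fin m) ℂ) : Matrix (Fin m) (Fin m) ℂ) i j
            = 0) ∧
        (∀ i j, R i j →
          ((g * ⁅x k, x l⁆ * g⁻¹ : Matrix.unitaryGroup (Fin m) ℂ) : Matrix (Fin m) (Fin m) ℂ) i i
            = ((g * ⁅x k, x l⁆ * g⁻¹ : Matrix.unitaryGroup (Fin m) ℂ) : Matrix (Fin m) (Fin m) ℂ)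
                j j)) :=
  stmt16_general m n x hx

end
end
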